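/- arXiv:2605.29571 — 5 statements merged into one kernel-verified Lean document; each statement's English description precedes it below -/
import Mathlib

section
/- Fix an integer k ≥ 2 and disjoint finite sets A, B with |A| = |B| = 2k; let P = A ∪ B. Let S* ⊆ P satisfy |S* ∩ A| = k+1 and |S* ∩ B| = k−1. Suppose y' : P → ℝ is such that S* is the unique minimizer of y'(S) − v_{S*}(S) over all S ⊆ P. Then: (i) y'(p) − y'(q) > −1/6 for all q ∈ S* and p ∈ P \ S*, and (ii) y'(b) − y'(a) > 1/3 for all a ∈ A ∩ S* and b ∈ B \ S*. -/
/-- The game `v̄`: `v̄(S) = 2k + 1/2` if `|S| > 2k` or `|S∩A| = |S∩B| = k`, else `|S|`. -/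
noncomputable def vbar {U : Type*} [DecidableEq U] (k : ℕ) (A B : Finset U)
    (S : Finset U) : ℝ :=
  if 2 * k < S.card ∨ ((S ∩ A).card = k ∧ (S ∩ B).card = k) then (2 * k : ℝ) + 1 / 2
  else (S.card : ℝ)

/-- The game `v_{S*}`: equals `v̄` except `v_{S*}(S*) = 2k + 1/6`. -/
noncomputable def vS {U : Type*} [DecidableEq U] (k : ℕ) (A B Sstar : Finset U)
    (S : Finset U) : ℝ :=
  if S = Sstar then (2 * k : ℝ) + 1 / 6 else vbar k A B S

/-!
Both bounds come from comparing `S*` with the coalition `S* - q + p` obtained by exchanging one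
member `q` of `S*` for an outsider `p`: it has the same size `2k`, so its excess exceeds that of
`S*` only if `y'(p) - y'(q) > v(S* - q + p) - (2k + 1/6)`. Every coalition of size `2k` has
value at least `2k`, which gives (i); exchanging `a ∈ A` for `b ∈ B` produces a coalition with
`k` players on each side, of value `2k + 1/2`, which gives (ii).
-/

section FinsetExchange

variable {α : Type*} [DecidableEq α]

theorem card_eq_card_inter_add_card_inter {S A B : Finset α} (hAB : Disjoint A B)
    (hS : S ⊆ A ∪ B) : S.card = (S ∩ A).card + (S ∩ B).card := by
  rw [← Finset.card_union_of_disjoint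
      (hAB.mono Finset.inter_subset_right Finset.inter_subset_right),
    ← Finset.inter_union_distrib_left, Finset.inter_eq_left.mpr hS]

def exchange (S : Finset α) (q p : α) : Finset α := insert p (S.erase q)

variable {S C : Finset α} {q p : α}

theorem exchange_ne (hp : p ∉ S) : exchange S q p ≠ S :=
  fun h => hp (h ▸ Finset.mem_insert_self p _)

theorem exchange_subset {P : Finset α} (hS : S ⊆ P) (hp : p ∈ P) : exchange S q p ⊆ P :=
  Finset.insert_subset hp ((Finset.erase_subset q S).trans hS)

theorem card_exchange (hq : q ∈ S) (hp : p ∉ S) : (exchange S q p).card = S.card := by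
  have hq' : 1 ≤ S.card := Finset.card_pos.mpr ⟨q, hq⟩
  rw [exchange, Finset.card_insert_of_notMem (fun h => hp (Finset.mem_of_mem_erase h)),
    Finset.card_erase_of_mem hq]
  omega

theorem sum_exchange {M : Type*} [AddCommGroup M] (f : α → M) (hq : q ∈ S) (hp : p ∉ S) :
    ∑ x ∈ exchange S q p, f x = ∑ x ∈ S, f x + (f p - f q) := by
  rw [exchange, Finset.sum_insert (fun h => hp (Finset.mem_of_mem_erase h)),
    Finset.sum_erase_eq_sub hq]
  abel

theorem card_exchange_inter_add_one (hqS : q ∈ S) (hqC : q ∈ C) (hpC : p ∉ C) :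
    (exchange S q p ∩ C).card + 1 = (S ∩ C).card := by
  rw [exchange, Finset.insert_inter_of_notMem hpC, Finset.erase_inter]
  exact Finset.card_erase_add_one (Finset.mem_inter.mpr ⟨hqS, hqC⟩)

theorem card_exchange_inter (hpS : p ∉ S) (hpC : p ∈ C) (hqC : q ∉ C) :
    (exchange S q p ∩ C).card = (S ∩ C).card + 1 := by
  rw [exchange, Finset.insert_inter_of_mem hpC, Finset.erase_inter,
    Finset.erase_eq_of_notMem (fun h => hqC (Finset.mem_inter.mp h).2)]
  exact Finset.card_insert_of_notMem (fun h => hpS (Finset.mem_inter.mp h).1)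

theorem sub_lt_of_unique_min_excess (P Sstar : Finset α) (y : α → ℝ) (v : Finset α → ℝ)
    (hSsub : Sstar ⊆ P)
    (hmin : ∀ S ⊆ P, S ≠ Sstar →
      (∑ p ∈ Sstar, y p) - v Sstar < (∑ p ∈ S, y p) - v S)
    (hq : q ∈ Sstar) (hp : p ∈ P \ Sstar) :
    v (exchange Sstar q p) - v Sstar < y p - y q := by
  obtain ⟨hpP, hpS⟩ := Finset.mem_sdiff.mp hp
  have h := hmin (exchange Sstar q p) (exchange_subset hSsub hpP) (exchange_ne hpS)
  rw [sum_exchange y hq hpS] at h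
  linarith

end FinsetExchange

section Game

variable {U : Type*} [DecidableEq U] {k : ℕ} {A B S : Finset U}

theorem two_mul_le_vbar (hS : 2 * k ≤ S.card) : (2 * k : ℝ) ≤ vbar k A B S := by
  unfold vbar
  split
  · linarith
  · exact_mod_cast hS

theorem vbar_of_card_inter_eq (hA : (S ∩ A).card = k) (hB : (S ∩ B).card = k) :
    vbar k A B S = 2 * k + 1 / 2 :=
  if_pos (Or.inr ⟨hA, hB⟩)

end Game

theorem stmt5_general {U : Type*} [DecidableEq U] (k : ℕ) (hk : 2 ≤ k)
    (A B : Finset U) (hAB : Disjoint A B)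
    (P : Finset U) (hP : P = A ∪ B)
    (Sstar : Finset U) (hSsub : Sstar ⊆ P)
    (hSA : (Sstar ∩ A).card = k + 1) (hSB : (Sstar ∩ B).card = k - 1)
    (y' : U → ℝ)
    (hmin : ∀ S ⊆ P, S ≠ Sstar →
      (∑ p ∈ Sstar, y' p) - vS k A B Sstar Sstar < (∑ p ∈ S, y' p) - vS k A B Sstar S) :
    (∀ q ∈ Sstar, ∀ p ∈ P \ Sstar, y' p - y' q > -(1 / 6)) ∧
    (∀ a ∈ A ∩ Sstar, ∀ b ∈ B \ Sstar, y' b - y' a > 1 / 3) := by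
  subst hP
  have hcard : Sstar.card = 2 * k := by
    rw [card_eq_card_inter_add_card_inter hAB hSsub, hSA, hSB]
    omega
  have hgain : ∀ q ∈ Sstar, ∀ p ∈ (A ∪ B) \ Sstar,
      vbar k A B (exchange Sstar q p) - (2 * k + 1 / 6) < y' p - y' q := by
    intro q hq p hp
    have h := sub_lt_of_unique_min_excess _ _ y' _ hSsub hmin hq hp
    simpa [vS, exchange_ne (Finset.mem_sdiff.mp hp).2] using h
  refine ⟨fun q hq p hp => ?_, fun a ha b hb => ?_⟩
  · have hv := two_mul_le_vbar (A := A) (B := B)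
      (card_exchange hq (Finset.mem_sdiff.mp hp).2 ▸ hcard.ge)
    linarith [hgain q hq p hp]
  · obtain ⟨haA, haS⟩ := Finset.mem_inter.mp ha
    obtain ⟨hbB, hbS⟩ := Finset.mem_sdiff.mp hb
    have hbA : b ∉ A := Finset.disjoint_right.mp hAB hbB
    have haB : a ∉ B := Finset.disjoint_left.mp hAB haA
    have hA' := card_exchange_inter_add_one haS haA hbA
    have hB' := card_exchange_inter hbS hbB haB
    have hv : vbar k A B (exchange Sstar a b) = 2 * k + 1 / 2 :=
      vbar_of_card_inter_eq (by omega) (by omega)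
    linarith [hgain a haS b (Finset.mem_sdiff.mpr ⟨Finset.mem_union_right A hbB, hbS⟩)]

/-- If `S*` is the unique minimizer of the excess `y'(S) − v_{S*}(S)` over all
coalitions `S ⊆ P`, then (i) `y'(p) − y'(q) > −1/6` for all `q ∈ S*`, `p ∈ P \ S*`, and
(ii) `y'(b) − y'(a) > 1/3` for all `a ∈ A ∩ S*`, `b ∈ B \ S*`. -/
theorem stmt5 {U : Type*} [DecidableEq U] (k : ℕ) (hk : 2 ≤ k)
    (A B : Finset U) (hAB : Disjoint A B) (hA : A.card = 2 * k) (hB : B.card = 2 * k)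
    (P : Finset U) (hP : P = A ∪ B)
    (Sstar : Finset U) (hSsub : Sstar ⊆ P)
    (hSA : (Sstar ∩ A).card = k + 1) (hSB : (Sstar ∩ B).card = k - 1)
    (y' : U → ℝ)
    (hmin : ∀ S ⊆ P, S ≠ Sstar →
      (∑ p ∈ Sstar, y' p) - vS k A B Sstar Sstar < (∑ p ∈ S, y' p) - vS k A B Sstar S) :
    (∀ q ∈ Sstar, ∀ p ∈ P \ Sstar, y' p - y' q > -(1 / 6)) ∧
    (∀ a ∈ A ∩ Sstar, ∀ b ∈ B \ Sstar, y' b - y' a > 1 / 3) :=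
  stmt5_general k hk A B hAB P hP Sstar hSsub hSA hSB y' hmin
end

section
/- Let P be a finite set and v : 2^P → ℝ monotone (v(S) ≤ v(T) whenever S ⊆ T ⊆ P) with v(∅) = 0. Let y : P → ℝ with y ≥ 0, let A, B ⊆ P be disjoint, let α ≥ 1, and let U ≥ v(P). Define ŷ : P → ℝ by ŷ_p = 0 for p ∈ A, ŷ_p = α·U + 1 for p ∈ B, and ŷ_p = y_p otherwise. Suppose S' ⊆ P and λ' ∈ ℝ satisfy λ' ≤ v(S') and ŷ(S') − λ' ≤ α·ŷ(T) − v(T) for all T ⊆ P. Then S' ∩ B = ∅, and the set S'' := S' ∪ A satisfies λ' ≤ v(S'') and y(S'') − λ' ≤ α·y(T) − v(T) for all T with A ⊆ T ⊆ P \ B. -/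
/-!
Making `A` free and `B` more expensive than any feasible excess turns the restricted problem into
the unrestricted one. Testing the approximation against `T = ∅` bounds `ŷ(S')` by
`λ' ≤ v(S') ≤ U < α·U + 1`, so `S'` cannot contain a point of `B`. For `A ⊆ T ⊆ P \ B` the
allocations differ only on `A`, where `ŷ` vanishes: `ŷ(S') = y(S' ∪ A) − y(A)` and
`ŷ(T) = y(T) − y(A)`, and `α ≥ 1` absorbs the extra `y(A) ≥ 0`.
-/

open Finset

section penalizedAllocation

variable {P : Type*} [DecidableEq P]

def penalizedAllocation (A B : Finset P) (M : ℝ) (y : P → ℝ) (p : P) : ℝ :=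
  if p ∈ A then 0 else if p ∈ B then M else y p

variable {A B S : Finset P} {M : ℝ} {y : P → ℝ}

theorem penalizedAllocation_nonneg (hy : ∀ p, 0 ≤ y p) (hM : 0 ≤ M) (p : P) :
    0 ≤ penalizedAllocation A B M y p := by
  unfold penalizedAllocation
  split_ifs <;> first | rfl | assumption | exact hy p

theorem sum_penalizedAllocation_of_disjoint (hS : Disjoint S B) :
    ∑ p ∈ S, penalizedAllocation A B M y p = ∑ p ∈ S \ A, y p := by
  rw [← sum_filter_not_add_sum_filter S (· ∈ A), sdiff_eq_filter]
  have hA : ∀ p ∈ S.filter (· ∈ A), penalizedAllocation A B M y p = 0 := fun p hp ↦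
    if_pos (mem_filter.1 hp).2
  have hSA : ∀ p ∈ S.filter (· ∉ A), penalizedAllocation A B M y p = y p := fun p hp ↦ by
    obtain ⟨hpS, hpA⟩ := mem_filter.1 hp
    simp only [penalizedAllocation, if_neg hpA, if_neg (disjoint_left.1 hS hpS)]
  rw [sum_congr rfl hA, sum_congr rfl hSA, sum_const_zero, add_zero]

theorem disjoint_of_sum_penalizedAllocation_lt (hAB : Disjoint A B) (hy : ∀ p, 0 ≤ y p)
    (hM : 0 ≤ M) (hS : ∑ p ∈ S, penalizedAllocation A B M y p < M) : Disjoint S B := by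
  refine disjoint_right.2 fun p hpB hpS ↦ hS.not_ge ?_
  calc M = penalizedAllocation A B M y p := by
        simp only [penalizedAllocation, if_neg (disjoint_right.1 hAB hpB), if_pos hpB]
    _ ≤ ∑ q ∈ S, penalizedAllocation A B M y q :=
        single_le_sum (fun q _ ↦ penalizedAllocation_nonneg hy hM q) hpS

theorem sum_union_sub_le_of_penalized_le {T : Finset P} {α lam c : ℝ} (hy : ∀ p, 0 ≤ y p)
    (hα : 1 ≤ α) (hS : Disjoint S B) (hAT : A ⊆ T) (hT : Disjoint T B)
    (h : ∑ p ∈ S, penalizedAllocation A B M y p - lam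
      ≤ α * ∑ p ∈ T, penalizedAllocation A B M y p - c) :
    ∑ p ∈ S ∪ A, y p - lam ≤ α * ∑ p ∈ T, y p - c := by
  rw [sum_penalizedAllocation_of_disjoint hS, sum_penalizedAllocation_of_disjoint hT] at h
  have hSA : ∑ p ∈ S ∪ A, y p = ∑ p ∈ S \ A, y p + ∑ p ∈ A, y p := by
    rw [← sum_union sdiff_disjoint, sdiff_union_self_eq_union]
  have hTA : ∑ p ∈ T, y p = ∑ p ∈ T \ A, y p + ∑ p ∈ A, y p := (sum_sdiff hAT).symm
  have hA : 0 ≤ ∑ p ∈ A, y p := sum_nonneg fun p _ ↦ hy p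
  rw [hSA, hTA]
  nlinarith

end penalizedAllocation

/-- An `α`-approximate solution to the unrestricted minimum-excess problem for
the modified allocation `ŷ` (zero on `A`, prohibitively expensive on `B`) avoids `B`, and
adding `A` to it yields an `α`-approximate solution to the minimum-excess problem
restricted to coalitions `T` with `A ⊆ T ⊆ P \ B`. -/
theorem stmt8 {P : Type*} [Fintype P] [DecidableEq P]
    (v : Finset P → ℝ)
    (hmono : ∀ S T : Finset P, S ⊆ T → v S ≤ v T) (hv0 : v ∅ = 0)
    (y : P → ℝ) (hy : ∀ p, 0 ≤ y p)
    (A B : Finset P) (hAB : Disjoint A B)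
    (α : ℝ) (hα : 1 ≤ α) (U : ℝ) (hU : v Finset.univ ≤ U)
    (yhat : P → ℝ)
    (hyhat : ∀ p, yhat p = if p ∈ A then 0 else if p ∈ B then α * U + 1 else y p)
    (S' : Finset P) (lam : ℝ) (hlam : lam ≤ v S')
    (happrox : ∀ T : Finset P,
      (∑ p ∈ S', yhat p) - lam ≤ α * (∑ p ∈ T, yhat p) - v T) :
    S' ∩ B = ∅ ∧ lam ≤ v (S' ∪ A) ∧
      ∀ T : Finset P, A ⊆ T → Disjoint T B →
        (∑ p ∈ S' ∪ A, y p) - lam ≤ α * (∑ p ∈ T, y p) - v T := by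
  obtain rfl : yhat = penalizedAllocation A B (α * U + 1) y := funext hyhat
  have hU0 : 0 ≤ U := hv0 ▸ (hmono _ _ (empty_subset _)).trans hU
  have hM : 0 ≤ α * U + 1 := by positivity
  have hS'_le : ∑ p ∈ S', penalizedAllocation A B (α * U + 1) y p ≤ U := by
    have hT₀ := happrox ∅
    rw [sum_empty, mul_zero, hv0] at hT₀
    linarith [hmono _ _ (subset_univ S')]
  have hS'B : Disjoint S' B :=
    disjoint_of_sum_penalizedAllocation_lt hAB hy hM (by nlinarith)
  exact ⟨disjoint_iff_inter_eq_empty.1 hS'B, hlam.trans (hmono _ _ subset_union_left),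
    fun T hAT hTB ↦ sum_union_sub_le_of_penalized_le hy hα hS'B hAT hTB (happrox T)⟩
end

section
/- Let P be a finite set and v : 2^P → ℝ monotone (v(S) ≤ v(T) whenever S ⊆ T ⊆ P) with v(∅) = 0. Let y : P → ℝ with y ≥ 0, let α ≥ 1 and ε > 0, let S* ⊆ P, and let p ∈ P \ S* with y_p ≤ ε·y(S*). Suppose S ⊆ P with p ∉ S and λ ∈ ℝ satisfy λ ≤ v(S) and y(S) − λ ≤ α·y(T) − v(T) for all T ⊆ P with p ∉ T. Then λ ≤ v(S ∪ {p}), y(S) − λ ≤ α·y(S*) − v(S*), and y(S ∪ {p}) − λ ≤ (α + ε)·y(S*) − v(S*). -/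
theorem stmt9_general {P : Type*} [DecidableEq P]
    (v : Finset P → ℝ)
    (hmono : ∀ S T : Finset P, S ⊆ T → v S ≤ v T)
    (y : P → ℝ)
    (α ε : ℝ)
    (Sstar : Finset P) (p : P) (hpS : p ∉ Sstar)
    (hyp : y p ≤ ε * ∑ q ∈ Sstar, y q)
    (S : Finset P) (hpS' : p ∉ S) (lam : ℝ) (hlam : lam ≤ v S)
    (happrox : ∀ T : Finset P, p ∉ T →
      (∑ q ∈ S, y q) - lam ≤ α * (∑ q ∈ T, y q) - v T) :
    lam ≤ v (insert p S) ∧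
    (∑ q ∈ S, y q) - lam ≤ α * (∑ q ∈ Sstar, y q) - v Sstar ∧
    (∑ q ∈ insert p S, y q) - lam ≤ (α + ε) * (∑ q ∈ Sstar, y q) - v Sstar := by
  have hSstar := happrox Sstar hpS
  refine ⟨hlam.trans (hmono _ _ (Finset.subset_insert p S)), hSstar, ?_⟩
  rw [Finset.sum_insert hpS', add_mul]
  linarith

/-- Case (a) of the reduction of LSA-MinExcess to MinExcess: if `p ∉ S*` is
cheap (`y p ≤ ε·y(S*)`) and `(S, λ)` is an `α`-approximate minimum-excess solution among
coalitions avoiding `p`, then `λ` remains a valid value bound for `S ∪ {p}`, `S` is cheap,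
and `S ∪ {p}` is `(α+ε)`-cheap compared to `S*`. -/
theorem stmt9 {P : Type*} [Fintype P] [DecidableEq P]
    (v : Finset P → ℝ)
    (hmono : ∀ S T : Finset P, S ⊆ T → v S ≤ v T) (hv0 : v ∅ = 0)
    (y : P → ℝ) (hy : ∀ p, 0 ≤ y p)
    (α ε : ℝ) (hα : 1 ≤ α) (hε : 0 < ε)
    (Sstar : Finset P) (p : P) (hpS : p ∉ Sstar)
    (hyp : y p ≤ ε * ∑ q ∈ Sstar, y q)
    (S : Finset P) (hpS' : p ∉ S) (lam : ℝ) (hlam : lam ≤ v S)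
    (happrox : ∀ T : Finset P, p ∉ T →
      (∑ q ∈ S, y q) - lam ≤ α * (∑ q ∈ T, y q) - v T) :
    lam ≤ v (insert p S) ∧
    (∑ q ∈ S, y q) - lam ≤ α * (∑ q ∈ Sstar, y q) - v Sstar ∧
    (∑ q ∈ insert p S, y q) - lam ≤ (α + ε) * (∑ q ∈ Sstar, y q) - v Sstar :=
  stmt9_general v hmono y α ε Sstar p hpS hyp S hpS' lam hlam happrox
end

section
/- Let P be a finite set, P' ⊆ P, y : P → ℝ with y ≥ 0, ε > 0, K = ⌈1/ε⌉, and S* ⊆ P. Assume that every p ∈ P' \ S* satisfies y_p > ε·y(S*). Let I ⊆ S* ∩ P' with |I| = min(K, |S* ∩ P'|) be chosen so that y(I) is maximal among all subsets of S* ∩ P' of that cardinality. Define O := {p ∈ P' \ I : y_p > min_{q∈I} y_q} if |I| = K, and O := P' \ I if |I| < K. Then P' \ S* = O. -/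
/-!
If `|I| < K`, then `I` is all of `S* ∩ P'`, so `P' \ I = P' \ S*`. If `|I| = K ≥ 1/ε`, the
cheapest member of `I` costs at most `y(I)/K ≤ ε·y(S*)`, hence less than every player of
`P' \ S*`; conversely, a player of `(S* ∩ P') \ I` costing more than some member of `I` could
be swapped into `I`, contradicting the maximality of `y(I)`.
-/

open Finset

section

variable {U : Type*} {y : U → ℝ}

theorem one_le_mul_natCeil_inv {ε : ℝ} (hε : 0 < ε) : 1 ≤ ε * ⌈1 / ε⌉₊ := by
  have h := Nat.le_ceil (1 / ε)
  rwa [div_le_iff₀ hε, mul_comm] at h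

theorem exists_mem_le_mul_sum_of_subset {I S : Finset U} {ε : ℝ} (hIS : I ⊆ S)
    (hy : ∀ q ∈ S, 0 ≤ y q) (hεI : 1 ≤ ε * #I) :
    ∃ q ∈ I, y q ≤ ε * ∑ q ∈ S, y q := by
  have hI : I.Nonempty := by
    by_contra! hI
    simp only [hI, card_empty, Nat.cast_zero, mul_zero] at hεI
    linarith
  have hε : 0 ≤ ε := by
    by_contra! h
    nlinarith [(Nat.cast_nonneg #I : (0 : ℝ) ≤ #I)]
  obtain ⟨q, hqI, hq_min⟩ := I.exists_min_image y hI
  refine ⟨q, hqI, ?_⟩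
  have hsum : #I * y q ≤ ∑ q ∈ S, y q :=
    calc #I * y q = #I • y q := (nsmul_eq_mul _ _).symm
      _ ≤ ∑ q ∈ I, y q := card_nsmul_le_sum I y _ hq_min
      _ ≤ ∑ q ∈ S, y q := sum_le_sum_of_subset_of_nonneg hIS fun q hq _ => hy q hq
  have hq_nonneg : 0 ≤ y q := hy q (hIS hqI)
  nlinarith [mul_le_mul_of_nonneg_left hsum hε]

theorem apply_le_of_forall_card_eq_sum_le [DecidableEq U] {I T : Finset U} (hIT : I ⊆ T)
    (hmax : ∀ J ⊆ T, #J = #I → ∑ q ∈ J, y q ≤ ∑ q ∈ I, y q)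
    {p q : U} (hp : p ∈ T \ I) (hq : q ∈ I) : y p ≤ y q := by
  rw [mem_sdiff] at hp
  have hp_erase : p ∉ I.erase q := fun h => hp.2 (mem_of_mem_erase h)
  have hswap := hmax (insert p (I.erase q))
    (insert_subset hp.1 ((erase_subset q I).trans hIT))
    (by rw [card_insert_of_notMem hp_erase, card_erase_add_one hq])
  rw [sum_insert hp_erase, sum_erase_eq_sub hq] at hswap
  linarith

end

theorem stmt10_general {U : Type*} [DecidableEq U]
    (P P' : Finset U)
    (y : U → ℝ) (hy : ∀ p ∈ P, 0 ≤ y p)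
    (ε : ℝ) (hε : 0 < ε) (K : ℕ) (hK : K = ⌈1 / ε⌉₊)
    (Sstar : Finset U) (hS : Sstar ⊆ P)
    (hbig : ∀ p ∈ P' \ Sstar, ε * (∑ q ∈ Sstar, y q) < y p)
    (I : Finset U) (hIsub : I ⊆ Sstar ∩ P')
    (hIcard : I.card = min K (Sstar ∩ P').card)
    (hImax : ∀ J ⊆ Sstar ∩ P', J.card = I.card → (∑ q ∈ J, y q) ≤ ∑ q ∈ I, y q)
    (O : Finset U)
    (hO : O = if I.card = K
        then (P' \ I).filter (fun p => ∃ q ∈ I, y q < y p)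
        else P' \ I) :
    P' \ Sstar = O := by
  have hIS : I ⊆ Sstar := hIsub.trans inter_subset_left
  subst hO
  split_ifs with hIK
  · ext p
    simp only [mem_sdiff, mem_filter]
    constructor
    · rintro ⟨hp, hpS⟩
      obtain ⟨q, hqI, hq⟩ := exists_mem_le_mul_sum_of_subset hIS (fun q hq => hy q (hS hq))
        (by rw [hIK, hK]; exact one_le_mul_natCeil_inv hε)
      have hqp : y q < y p := hq.trans_lt (hbig p (mem_sdiff.mpr ⟨hp, hpS⟩))
      exact ⟨⟨hp, fun hpI => hpS (hIS hpI)⟩, q, hqI, hqp⟩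
    · rintro ⟨⟨hp, hpI⟩, q, hqI, hqp⟩
      refine ⟨hp, fun hpS => hqp.not_ge ?_⟩
      exact apply_le_of_forall_card_eq_sum_le hIsub hImax
        (mem_sdiff.mpr ⟨mem_inter.mpr ⟨hpS, hp⟩, hpI⟩) hqI
  · have hI : I = Sstar ∩ P' := eq_of_subset_of_card_le hIsub (by omega)
    rw [hI, sdiff_inter_self_right]

/-- Case (b) of the reduction of LSA-MinExcess to MinExcess: if every player
of `P'` outside `S*` is expensive, and `I` is a `y`-maximal subset of `S* ∩ P'` of size
`min(K, |S* ∩ P'|)` with `K = ⌈1/ε⌉`, then the out-set `O` (players of `P' \ I` whose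
`y`-value exceeds `min_{q∈I} y q` if `|I| = K`, and all of `P' \ I` otherwise) is exactly
`P' \ S*`. -/
theorem stmt10 {U : Type*} [DecidableEq U]
    (P P' : Finset U) (hP' : P' ⊆ P)
    (y : U → ℝ) (hy : ∀ p ∈ P, 0 ≤ y p)
    (ε : ℝ) (hε : 0 < ε) (K : ℕ) (hK : K = ⌈1 / ε⌉₊)
    (Sstar : Finset U) (hS : Sstar ⊆ P)
    (hbig : ∀ p ∈ P' \ Sstar, ε * (∑ q ∈ Sstar, y q) < y p)
    (I : Finset U) (hIsub : I ⊆ Sstar ∩ P')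
    (hIcard : I.card = min K (Sstar ∩ P').card)
    (hImax : ∀ J ⊆ Sstar ∩ P', J.card = I.card → (∑ q ∈ J, y q) ≤ ∑ q ∈ I, y q)
    (O : Finset U)
    (hO : O = if I.card = K
        then (P' \ I).filter (fun p => ∃ q ∈ I, y q < y p)
        else P' \ I) :
    P' \ Sstar = O :=
  stmt10_general P P' y hy ε hε K hK Sstar hS hbig I hIsub hIcard hImax O hO
end

section
/- For every n ∈ ℕ and every ε with 0 < ε ≤ 1, there exist a finite set P with |P| = 8(n+2)+1 and monotone, superadditive value functions v, ṽ : 2^P → ℝ with v(∅) = ṽ(∅) = 0 such that |v(S) − ṽ(S)| ≤ ε for all S ⊆ P, and there are allocations y, ỹ : P → ℝ with y(P) = v(P) and ỹ(P) = ṽ(P) such that θ_v(z) ≤_lex θ_v(y) for every z : P → ℝ with z(P) = v(P), θ_{ṽ}(z) ≤_lex θ_{ṽ}(ỹ) for every z : P → ℝ with z(P) = ṽ(P), and |y_p − ỹ_p| = 2^n·ε for some player p ∈ P. -/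
/-!
Both games have the form `v(S) = R·|S| − φ(c(S))` with integer player weights
`c_k = 2^k`, `c_{n+1+k} = −2^k` (`k ≤ n`, all other weights `0`, so `c(P) = 0`) and a penalty
`φ ≥ 0` vanishing only at `0`. Subadditivity of `φ` makes such a game superadditive, and a
large `R` makes it monotone.

For `v` the penalty depends only on `|c(S)|`, and the equal split `y ≡ R` has excess
`φ(c(S))`. That excess does not change under complementation, so an allocation `z ≠ y` must
pay less than `y` to a coalition whose excess is least among the coalitions where `z` and `y`
differ. Hence `y` is the nucleolus.

For `ṽ = v − ε·sign(c(S))` the allocation `ỹ = R − ε·c` has excess `0` where `c(S) = 0`,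
excess `2` where `c(S) > 0` or `c(S) = −1`, and a larger excess everywhere else. If `z ≠ ỹ`
pays a weight-zero coalition differently, that coalition or its complement loses at excess `0`.
Otherwise let `k ≤ n` be the first player where `z` and `ỹ` differ: `z` pays less than `ỹ` to
`{0, …, k}` or to `{0, …, k−1, n+1+k}`, whose weights are `2^{k+1} − 1` and `−1`. Hence `ỹ`
is the nucleolus, while `y_n − ỹ_n = 2^n ε`.
-/

/-- The sorted (non-decreasing) list of excesses `y(S) − v(S)` over all coalitions
`S ⊆ P`. -/
noncomputable def excessListOn (P : Finset ℕ) (v : Finset ℕ → ℝ) (y : ℕ → ℝ) : List ℝ :=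
  (P.powerset.val.map fun S => (∑ p ∈ S, y p) - v S).sort (· ≤ ·)

/-- Lexicographic order (`≤`) on lists of reals. -/
def lexLE (l₁ l₂ : List ℝ) : Prop := l₁ = l₂ ∨ List.Lex (· < ·) l₁ l₂

open Finset

section SortedLex

variable {α : Type*} [LinearOrder α]

theorem lex_of_filter_lt_filter {τ : α} : ∀ {l₁ l₂ : List α}, l₁.Pairwise (· ≤ ·) →
    l₂.Pairwise (· ≤ ·) → l₁.length = l₂.length →
    (l₂ : Multiset α).filter (· < τ) < (l₁ : Multiset α).filter (· < τ) →
    List.Lex (· < ·) l₁ l₂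
  | [], [], _, _, _, h => absurd h (by simp)
  | a :: t₁, b :: t₂, h₁, h₂, hlen, h => by
    obtain ⟨x, hx⟩ := Multiset.exists_mem_of_ne_zero (ne_bot_of_gt h)
    rw [Multiset.mem_filter, Multiset.mem_coe] at hx
    have ha : a < τ := (h₁.rel_head hx.1).trans_lt hx.2
    rcases lt_trichotomy a b with hab | rfl | hba
    · exact .rel hab
    · rw [← Multiset.cons_coe, ← Multiset.cons_coe, Multiset.filter_cons_of_pos (p := (· < τ)) _ ha,
        Multiset.filter_cons_of_pos (p := (· < τ)) _ ha, Multiset.cons_lt_cons_iff] at h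
      exact .cons (lex_of_filter_lt_filter (List.pairwise_cons.1 h₁).2
        (List.pairwise_cons.1 h₂).2 (by simpa using hlen) h)
    · have hb : b ∈ ((b :: t₂ : List α) : Multiset α).filter (· < τ) := by simp [hba.trans ha]
      have hb₁ : b ∈ a :: t₁ := by
        simpa using Multiset.mem_of_le (Multiset.filter_le _ _) (Multiset.mem_of_le h.le hb)
      exact absurd (h₁.rel_head hb₁) hba.not_ge
  | [], _ :: _, _, _, hlen, _ | _ :: _, [], _, _, hlen, _ => by simp at hlen

end SortedLex

section Excess

variable {ι : Type*}

def excess (v : Finset ι → ℝ) (y : ι → ℝ) (S : Finset ι) : ℝ := ∑ p ∈ S, y p - v S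

def IsLeastExcessLoss (P : Finset ι) (v : Finset ι → ℝ) (y z : ι → ℝ) (S₀ : Finset ι) : Prop :=
  S₀ ⊆ P ∧ ∑ p ∈ S₀, z p < ∑ p ∈ S₀, y p ∧
    ∀ T ⊆ P, ∑ p ∈ T, z p ≠ ∑ p ∈ T, y p → excess v y S₀ ≤ excess v y T

variable {P S : Finset ι} {v : Finset ι → ℝ} {y z : ι → ℝ}

theorem sum_lt_or_sum_sdiff_lt [DecidableEq ι] (hS : S ⊆ P) (hP : ∑ p ∈ P, z p = ∑ p ∈ P, y p)
    (hne : ∑ p ∈ S, z p ≠ ∑ p ∈ S, y p) :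
    ∑ p ∈ S, z p < ∑ p ∈ S, y p ∨ ∑ p ∈ P \ S, z p < ∑ p ∈ P \ S, y p := by
  rw [sum_sdiff_eq_sub hS, sum_sdiff_eq_sub hS, hP, sub_lt_sub_iff_left]
  exact hne.lt_or_gt

theorem exists_isLeastExcessLoss_of_sum_ne [DecidableEq ι] (hS : S ⊆ P)
    (hP : ∑ p ∈ P, z p = ∑ p ∈ P, y p) (hne : ∑ p ∈ S, z p ≠ ∑ p ∈ S, y p)
    (hmin : ∀ T ⊆ P, ∑ p ∈ T, z p ≠ ∑ p ∈ T, y p →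
      excess v y S ≤ excess v y T ∧ excess v y (P \ S) ≤ excess v y T) :
    ∃ S₀, IsLeastExcessLoss P v y z S₀ := by
  rcases sum_lt_or_sum_sdiff_lt hS hP hne with hlt | hlt
  · exact ⟨S, hS, hlt, fun T hT hT' => (hmin T hT hT').1⟩
  · exact ⟨P \ S, sdiff_subset, hlt, fun T hT hT' => (hmin T hT hT').2⟩

theorem exists_isLeastExcessLoss_of_excess_sdiff_le [DecidableEq ι]
    (hcompl : ∀ S ⊆ P, excess v y (P \ S) ≤ excess v y S)
    (hP : ∑ p ∈ P, z p = ∑ p ∈ P, y p) (hne : ∃ p ∈ P, z p ≠ y p) :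
    ∃ S₀, IsLeastExcessLoss P v y z S₀ := by
  obtain ⟨p, hp, hzp⟩ := hne
  obtain ⟨S, hS, hSmin⟩ := exists_min_image
    (P.powerset.filter fun T => ∑ q ∈ T, z q ≠ ∑ q ∈ T, y q) (excess v y)
    ⟨{p}, by simpa [hp] using hzp⟩
  rw [mem_filter, mem_powerset] at hS
  refine exists_isLeastExcessLoss_of_sum_ne hS.1 hP hS.2 fun T hT hT' => ?_
  have hST := hSmin T (by simpa [hT] using hT')
  exact ⟨hST, (hcompl S hS.1).trans hST⟩

end Excess

section ExcessList

variable {P S₀ : Finset ℕ} {v : Finset ℕ → ℝ} {y z : ℕ → ℝ}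

theorem excessListOn_eq (P : Finset ℕ) (v : Finset ℕ → ℝ) (y : ℕ → ℝ) :
    excessListOn P v y = (P.powerset.val.map (excess v y)).sort (· ≤ ·) :=
  rfl

theorem excessListOn_congr (h : ∀ p ∈ P, z p = y p) : excessListOn P v z = excessListOn P v y := by
  rw [excessListOn_eq, excessListOn_eq]
  congr 1
  refine Multiset.map_congr rfl fun S hS => ?_
  rw [excess, excess, sum_congr rfl fun p hp => h p (mem_powerset.1 hS hp)]

-- Below `τ = excess v y S₀` every `y`-excess is also a `z`-excess, and `S₀` adds one more.
theorem excessListOn_lex_of_isLeastExcessLoss (h : IsLeastExcessLoss P v y z S₀) :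
    List.Lex (· < ·) (excessListOn P v z) (excessListOn P v y) := by
  obtain ⟨hS₀, hlt, hmin⟩ := h
  set τ := excess v y S₀
  set A := P.powerset.filter (excess v y · < τ)
  have hzA : ∀ T ∈ A, excess v z T = excess v y T := by
    intro T hT
    rw [mem_filter, mem_powerset] at hT
    have : ∑ p ∈ T, z p = ∑ p ∈ T, y p := by
      by_contra hne
      exact (hmin T hT.1 hne).not_gt hT.2
    rw [excess, excess, this]
  have hAB : A ⊂ P.powerset.filter (excess v z · < τ) := by
    rw [ssubset_iff_of_subset fun T hT => by
      simpa [hzA T hT] using (mem_filter.1 hT)]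
    refine ⟨S₀, ?_, fun hS₀A => (mem_filter.1 hS₀A).2.false⟩
    simpa [hS₀, excess, τ] using hlt
  rw [excessListOn_eq, excessListOn_eq]
  apply lex_of_filter_lt_filter (τ := τ) (Multiset.pairwise_sort _ _)
    (Multiset.pairwise_sort _ _) (by simp)
  simp only [Multiset.sort_eq, Multiset.filter_map]
  rw [← Multiset.map_congr rfl fun T hT => hzA T (by simpa [A] using hT)]
  exact Multiset.map_lt_map (val_lt_iff.2 hAB)

theorem lexLE_excessListOn_of_isLeastExcessLoss
    (h : (∃ p ∈ P, z p ≠ y p) → ∃ S₀, IsLeastExcessLoss P v y z S₀) :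
    lexLE (excessListOn P v z) (excessListOn P v y) := by
  by_cases hzy : ∃ p ∈ P, z p ≠ y p
  · obtain ⟨S₀, hS₀⟩ := h hzy
    exact .inr (excessListOn_lex_of_isLeastExcessLoss hS₀)
  · push Not at hzy
    exact .inl (excessListOn_congr hzy)

end ExcessList

section PenaltyGame

variable {ι : Type*}

def penaltyGame (R : ℝ) (c : ι → ℤ) (φ : ℤ → ℝ) (S : Finset ι) : ℝ :=
  R * #S - φ (∑ p ∈ S, c p)

variable {R : ℝ} {c : ι → ℤ} {φ : ℤ → ℝ}

theorem penaltyGame_empty (h : φ 0 = 0) : penaltyGame R c φ ∅ = 0 := by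
  simp [penaltyGame, h]

theorem penaltyGame_add_le_union [DecidableEq ι] (hφ : ∀ k l, φ (k + l) ≤ φ k + φ l)
    {S T : Finset ι} (hST : Disjoint S T) :
    penaltyGame R c φ S + penaltyGame R c φ T ≤ penaltyGame R c φ (S ∪ T) := by
  simp only [penaltyGame, card_union_of_disjoint hST, sum_union hST, Nat.cast_add]
  linarith [hφ (∑ p ∈ S, c p) (∑ p ∈ T, c p)]

theorem penaltyGame_mono (hφ : ∀ k, 0 ≤ φ k) {S T : Finset ι} (hT : φ (∑ p ∈ T, c p) ≤ R)
    (hST : S ⊆ T) : penaltyGame R c φ S ≤ penaltyGame R c φ T := by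
  obtain hcard | hcard := (card_le_card hST).eq_or_lt
  · rw [eq_of_subset_of_card_le hST hcard.ge]
  have hR : R * (#S + 1) ≤ R * #T :=
    mul_le_mul_of_nonneg_left (by exact_mod_cast hcard) ((hφ _).trans hT)
  simp only [penaltyGame]
  linarith [hφ (∑ p ∈ S, c p)]

theorem excess_penaltyGame (a : ι → ℝ) (S : Finset ι) :
    excess (penaltyGame R c φ) (fun p => R - a p) S = φ (∑ p ∈ S, c p) - ∑ p ∈ S, a p := by
  simp only [excess, penaltyGame, sum_sub_distrib, sum_const, nsmul_eq_mul]
  ring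

end PenaltyGame

namespace NucleolusInstability

section Penalties

variable {ε : ℝ} {k l : ℤ}

def symmPenalty (ε : ℝ) (k : ℤ) : ℝ := if k = 0 then 0 else 2 + ε * (|(k : ℝ)| - 1)

-- The excess of `ỹ = R − ε·c` in the perturbed game, as a function of `c(S)`.
def asymmPenalty (ε : ℝ) (k : ℤ) : ℝ :=
  if k = 0 then 0 else if 0 < k then 2 else 2 - 2 * ε * (k + 1)

def tiltedPenalty (ε : ℝ) (k : ℤ) : ℝ := ε * k + asymmPenalty ε k

@[simp]
theorem symmPenalty_zero (ε : ℝ) : symmPenalty ε 0 = 0 := if_pos rfl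

@[simp]
theorem asymmPenalty_zero (ε : ℝ) : asymmPenalty ε 0 = 0 := if_pos rfl

@[simp]
theorem tiltedPenalty_zero (ε : ℝ) : tiltedPenalty ε 0 = 0 := by simp [tiltedPenalty]

theorem one_le_abs_intCast (hk : k ≠ 0) : 1 ≤ |(k : ℝ)| := by
  exact_mod_cast Int.one_le_abs hk

theorem symmPenalty_neg (ε : ℝ) (k : ℤ) : symmPenalty ε (-k) = symmPenalty ε k := by
  simp [symmPenalty]

theorem symmPenalty_nonneg (hε : 0 ≤ ε) (k : ℤ) : 0 ≤ symmPenalty ε k := by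
  unfold symmPenalty
  split_ifs with hk
  · exact le_rfl
  · nlinarith [one_le_abs_intCast hk]

theorem symmPenalty_le (hε1 : ε ≤ 1) (k : ℤ) : symmPenalty ε k ≤ 2 + |(k : ℝ)| := by
  unfold symmPenalty
  split_ifs with hk
  · positivity
  · nlinarith [one_le_abs_intCast hk]

theorem symmPenalty_add_le (hε : 0 ≤ ε) (hε1 : ε ≤ 1) (k l : ℤ) :
    symmPenalty ε (k + l) ≤ symmPenalty ε k + symmPenalty ε l := by
  rcases eq_or_ne k 0 with rfl | hk
  · simp
  rcases eq_or_ne l 0 with rfl | hl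
  · simp
  rcases eq_or_ne (k + l) 0 with hkl | hkl
  · rw [hkl, symmPenalty_zero]
    exact add_nonneg (symmPenalty_nonneg hε k) (symmPenalty_nonneg hε l)
  simp only [symmPenalty, hk, hl, hkl, if_false, Int.cast_add]
  have := mul_le_mul_of_nonneg_left (abs_add_le (k : ℝ) l) hε
  nlinarith

theorem asymmPenalty_of_neg (ε : ℝ) (hk : k < 0) : asymmPenalty ε k = 2 - 2 * ε * (k + 1) := by
  simp [asymmPenalty, hk.ne, hk.not_gt]

theorem two_le_asymmPenalty (hε : 0 ≤ ε) (hk : k ≠ 0) : 2 ≤ asymmPenalty ε k := by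
  rw [asymmPenalty, if_neg hk]
  split_ifs with hpos
  · exact le_rfl
  · nlinarith [Int.cast_le_neg_one_of_neg (R := ℝ) (lt_of_le_of_ne (not_lt.1 hpos) hk)]

theorem asymmPenalty_nonneg (hε : 0 ≤ ε) (k : ℤ) : 0 ≤ asymmPenalty ε k := by
  rcases eq_or_ne k 0 with rfl | hk
  · simp
  · linarith [two_le_asymmPenalty hε hk]

theorem asymmPenalty_eq_two (hk : 0 < k ∨ k = -1) : asymmPenalty ε k = 2 := by
  rcases hk with hk | rfl
  · simp [asymmPenalty, hk, hk.ne']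
  · simp [asymmPenalty]

theorem asymmPenalty_add_le (hε : 0 ≤ ε) (hε1 : ε ≤ 1) (k l : ℤ) :
    asymmPenalty ε (k + l) ≤ asymmPenalty ε k + asymmPenalty ε l := by
  rcases eq_or_ne k 0 with rfl | hk
  · simp
  rcases eq_or_ne l 0 with rfl | hl
  · simp
  have hk2 := two_le_asymmPenalty hε hk
  have hl2 := two_le_asymmPenalty hε hl
  rcases lt_trichotomy (k + l) 0 with hkl | hkl | hkl
  · rw [asymmPenalty_of_neg ε hkl]
    rcases hk.lt_or_gt with hk' | hk'
    · rcases hl.lt_or_gt with hl' | hl'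
      · rw [asymmPenalty_of_neg ε hk', asymmPenalty_of_neg ε hl']
        push_cast
        linarith
      · rw [asymmPenalty_of_neg ε hk']
        push_cast
        nlinarith [(Int.cast_pos (R := ℝ)).2 hl']
    · rw [asymmPenalty_of_neg ε (by omega : l < 0)]
      push_cast
      nlinarith [(Int.cast_pos (R := ℝ)).2 hk']
  · rw [hkl, asymmPenalty_zero]
    linarith
  · rw [asymmPenalty_eq_two (.inl hkl)]
    linarith

theorem tiltedPenalty_add_le (hε : 0 ≤ ε) (hε1 : ε ≤ 1) (k l : ℤ) :
    tiltedPenalty ε (k + l) ≤ tiltedPenalty ε k + tiltedPenalty ε l := by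
  simp only [tiltedPenalty, Int.cast_add]
  linarith [asymmPenalty_add_le hε hε1 k l]

theorem tiltedPenalty_nonneg (hε : 0 ≤ ε) (hε1 : ε ≤ 1) (k : ℤ) : 0 ≤ tiltedPenalty ε k := by
  rcases lt_trichotomy k 0 with hk | rfl | hk
  · rw [tiltedPenalty, asymmPenalty_of_neg ε hk]
    nlinarith [Int.cast_le_neg_one_of_neg (R := ℝ) hk]
  · simp
  · rw [tiltedPenalty, asymmPenalty_eq_two (.inl hk)]
    nlinarith [Int.cast_pos (R := ℝ).2 hk]

theorem tiltedPenalty_le (hε : 0 ≤ ε) (hε1 : ε ≤ 1) (k : ℤ) :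
    tiltedPenalty ε k ≤ 2 + |(k : ℝ)| := by
  rcases lt_trichotomy k 0 with hk | rfl | hk
  · have hk' := Int.cast_le_neg_one_of_neg (R := ℝ) hk
    rw [tiltedPenalty, asymmPenalty_of_neg ε hk, abs_of_neg (by linarith)]
    nlinarith
  · simp
  · have hk' : (0 : ℝ) < k := Int.cast_pos.2 hk
    rw [tiltedPenalty, asymmPenalty_eq_two (.inl hk), abs_of_pos hk']
    nlinarith

theorem abs_tiltedPenalty_sub_symmPenalty_le (hε : 0 ≤ ε) (k : ℤ) :
    |tiltedPenalty ε k - symmPenalty ε k| ≤ ε := by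
  rcases lt_trichotomy k 0 with hk | rfl | hk
  · have hk' : (k : ℝ) < 0 := Int.cast_lt_zero.2 hk
    rw [tiltedPenalty, asymmPenalty_of_neg ε hk, symmPenalty, if_neg hk.ne, abs_of_neg hk']
    rw [show ε * k + (2 - 2 * ε * (k + 1)) - (2 + ε * (-k - 1)) = -ε by ring, abs_neg,
      abs_of_nonneg hε]
  · simpa using hε
  · have hk' : (0 : ℝ) < k := Int.cast_pos.2 hk
    rw [tiltedPenalty, asymmPenalty_eq_two (.inl hk), symmPenalty, if_neg hk.ne', abs_of_pos hk']
    rw [show ε * k + 2 - (2 + ε * (k - 1)) = ε by ring, abs_of_nonneg hε]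

end Penalties

section Construction

variable (n : ℕ)

def weight (p : ℕ) : ℤ :=
  if p ≤ n then 2 ^ p else if p ≤ 2 * n + 1 then -2 ^ (p - (n + 1)) else 0

def players : Finset ℕ := range (8 * (n + 2) + 1)

def base : ℝ := 2 + ∑ p ∈ players n, |(weight n p : ℝ)|

def game (ε : ℝ) : Finset ℕ → ℝ := penaltyGame (base n) (weight n) (symmPenalty ε)

def perturbedGame (ε : ℝ) : Finset ℕ → ℝ := penaltyGame (base n) (weight n) (tiltedPenalty ε)

def nucleolus : ℕ → ℝ := fun _ => base n

def perturbedNucleolus (ε : ℝ) : ℕ → ℝ := fun p => base n - ε * weight n p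

variable {n} {k p : ℕ}

theorem weight_of_le (hk : k ≤ n) : weight n k = 2 ^ k := if_pos hk

theorem weight_add_of_le (hk : k ≤ n) : weight n (n + 1 + k) = -2 ^ k := by
  rw [weight, if_neg (by omega), if_pos (by omega), Nat.add_sub_cancel_left]

theorem weight_of_lt (hp : 2 * n + 1 < p) : weight n p = 0 := by
  rw [weight, if_neg (by omega), if_neg (by omega)]

theorem mem_players : p ∈ players n ↔ p < 8 * (n + 2) + 1 := mem_range

theorem range_subset_players {m : ℕ} (hm : m ≤ 2 * n + 2) : range m ⊆ players n :=
  range_subset_range.2 (by omega)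

theorem sum_range_two_pow (k : ℕ) : ∑ i ∈ range k, (2 : ℤ) ^ i = 2 ^ k - 1 := by
  simpa using geom_sum_mul (2 : ℤ) k

theorem sum_weight_range (hk : k ≤ n + 1) : ∑ p ∈ range k, weight n p = 2 ^ k - 1 := by
  rw [sum_congr rfl fun p hp => weight_of_le (by simp at hp; omega), sum_range_two_pow]

theorem sum_weight_players : ∑ p ∈ players n, weight n p = 0 := by
  rw [← sum_subset (range_subset_players le_rfl) fun p _ hp => weight_of_lt (by simp at hp; omega),
    show 2 * n + 2 = (n + 1) + (n + 1) by ring, sum_range_add, sum_weight_range le_rfl,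
    sum_congr rfl fun k hk => weight_add_of_le (by simp at hk; omega), sum_neg_distrib,
    sum_range_two_pow, add_neg_cancel]

theorem sum_weight_sdiff {S : Finset ℕ} (hS : S ⊆ players n) :
    ∑ p ∈ players n \ S, weight n p = -∑ p ∈ S, weight n p := by
  rw [sum_sdiff_eq_sub hS, sum_weight_players, zero_sub]

theorem abs_sum_weight_le {T : Finset ℕ} (hT : T ⊆ players n) :
    |((∑ p ∈ T, weight n p : ℤ) : ℝ)| ≤ base n - 2 := by
  rw [base, add_sub_cancel_left]
  push_cast
  exact (abs_sum_le_sum_abs _ _).trans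
    (sum_le_sum_of_subset_of_nonneg hT fun _ _ _ => abs_nonneg _)

theorem penalty_le_base {φ : ℤ → ℝ} (hφ : ∀ k, φ k ≤ 2 + |(k : ℝ)|) {T : Finset ℕ}
    (hT : T ⊆ players n) : φ (∑ p ∈ T, weight n p) ≤ base n :=
  (hφ _).trans (by linarith [abs_sum_weight_le hT])

end Construction

section ZeroWeightCoalitions

variable {n : ℕ} {y z : ℕ → ℝ}

theorem add_eq_add_of_sum_eq (h0 : ∀ T ⊆ players n,
      ∑ p ∈ T, weight n p = 0 → ∑ p ∈ T, z p = ∑ p ∈ T, y p)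
    {k : ℕ} (hk : k ≤ n) : z k + z (n + 1 + k) = y k + y (n + 1 + k) := by
  have hpair : ({k, n + 1 + k} : Finset ℕ) ⊆ players n := by
    simp only [insert_subset_iff, singleton_subset_iff, mem_players]
    omega
  have hne : k ≠ n + 1 + k := by omega
  simpa [sum_pair hne, weight_of_le hk, weight_add_of_le hk] using h0 _ hpair

theorem exists_le_ne_of_sum_eq (h0 : ∀ T ⊆ players n,
      ∑ p ∈ T, weight n p = 0 → ∑ p ∈ T, z p = ∑ p ∈ T, y p)
    (hne : ∃ p ∈ players n, z p ≠ y p) : ∃ k ≤ n, z k ≠ y k := by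
  obtain ⟨p, hp, hzp⟩ := hne
  by_contra! hall
  apply hzp
  by_cases h₁ : p ≤ n
  · exact hall p h₁
  by_cases h₂ : p ≤ 2 * n + 1
  · obtain ⟨k, rfl⟩ : ∃ k, p = n + 1 + k := ⟨p - (n + 1), by omega⟩
    linarith [add_eq_add_of_sum_eq h0 (k := k) (by omega), hall k (by omega)]
  · simpa using h0 {p} (by simpa using hp) (by simp [weight_of_lt (by omega : 2 * n + 1 < p)])

theorem exists_sum_lt_of_sum_eq (h0 : ∀ T ⊆ players n,
      ∑ p ∈ T, weight n p = 0 → ∑ p ∈ T, z p = ∑ p ∈ T, y p)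
    (hne : ∃ p ∈ players n, z p ≠ y p) :
    ∃ S₀ ⊆ players n, (0 < ∑ p ∈ S₀, weight n p ∨ ∑ p ∈ S₀, weight n p = -1) ∧
      ∑ p ∈ S₀, z p < ∑ p ∈ S₀, y p := by
  classical
  have hex := exists_le_ne_of_sum_eq h0 hne
  set k := Nat.find hex
  obtain ⟨hkn, hzk⟩ : k ≤ n ∧ z k ≠ y k := Nat.find_spec hex
  have hlow : ∑ p ∈ range k, z p = ∑ p ∈ range k, y p :=
    sum_congr rfl fun j hj => by
      have hjk := mem_range.1 hj
      by_contra h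
      exact Nat.find_min hex hjk ⟨by omega, h⟩
  rcases hzk.lt_or_gt with hlt | hgt
  · refine ⟨range (k + 1), range_subset_players (by omega), .inl ?_, ?_⟩
    · rw [sum_weight_range (by omega), sub_pos]
      exact one_lt_pow₀ (by norm_num) (by omega)
    · rw [sum_range_succ, sum_range_succ, hlow]
      linarith
  · have hk : n + 1 + k ∉ range k := by simp
    refine ⟨insert (n + 1 + k) (range k), ?_, .inr ?_, ?_⟩
    · exact insert_subset (mem_players.2 (by omega)) (range_subset_players (by omega))
    · rw [sum_insert hk, weight_add_of_le hkn, sum_weight_range (by omega)]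
      ring
    · rw [sum_insert hk, sum_insert hk, hlow]
      linarith [add_eq_add_of_sum_eq h0 hkn]

end ZeroWeightCoalitions

section Games

variable {n : ℕ} {ε : ℝ}

theorem excess_game (S : Finset ℕ) :
    excess (game n ε) (nucleolus n) S = symmPenalty ε (∑ p ∈ S, weight n p) := by
  have h := excess_penaltyGame (R := base n) (c := weight n) (φ := symmPenalty ε) 0 S
  simp only [Pi.zero_apply, sub_zero, sum_const_zero] at h
  exact h

theorem excess_perturbedGame (S : Finset ℕ) :
    excess (perturbedGame n ε) (perturbedNucleolus n ε) S =
      asymmPenalty ε (∑ p ∈ S, weight n p) := by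
  refine (excess_penaltyGame (fun p => ε * weight n p) S).trans ?_
  rw [tiltedPenalty, ← mul_sum]
  push_cast
  ring

theorem sum_nucleolus : ∑ p ∈ players n, nucleolus n p = game n ε (players n) := by
  have := excess_game (n := n) (ε := ε) (players n)
  rwa [sum_weight_players, symmPenalty_zero, excess, sub_eq_zero] at this

theorem sum_perturbedNucleolus :
    ∑ p ∈ players n, perturbedNucleolus n ε p = perturbedGame n ε (players n) := by
  have := excess_perturbedGame (n := n) (ε := ε) (players n)
  rwa [sum_weight_players, asymmPenalty_zero, excess, sub_eq_zero] at this

theorem abs_game_sub_perturbedGame_le (hε : 0 ≤ ε) (S : Finset ℕ) :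
    |game n ε S - perturbedGame n ε S| ≤ ε := by
  rw [game, perturbedGame, penaltyGame, penaltyGame, sub_sub_sub_cancel_left]
  exact abs_tiltedPenalty_sub_symmPenalty_le hε _

theorem exists_isLeastExcessLoss_game {z : ℕ → ℝ}
    (hP : ∑ p ∈ players n, z p = ∑ p ∈ players n, nucleolus n p)
    (hne : ∃ p ∈ players n, z p ≠ nucleolus n p) :
    ∃ S₀, IsLeastExcessLoss (players n) (game n ε) (nucleolus n) z S₀ := by
  refine exists_isLeastExcessLoss_of_excess_sdiff_le (fun S hS => ?_) hP hne
  rw [excess_game, excess_game, sum_weight_sdiff hS, symmPenalty_neg]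

theorem exists_isLeastExcessLoss_perturbedGame (hε : 0 ≤ ε) {z : ℕ → ℝ}
    (hP : ∑ p ∈ players n, z p = ∑ p ∈ players n, perturbedNucleolus n ε p)
    (hne : ∃ p ∈ players n, z p ≠ perturbedNucleolus n ε p) :
    ∃ S₀, IsLeastExcessLoss (players n) (perturbedGame n ε) (perturbedNucleolus n ε) z S₀ := by
  by_cases h0 : ∃ T ⊆ players n, ∑ p ∈ T, weight n p = 0 ∧
      ∑ p ∈ T, z p ≠ ∑ p ∈ T, perturbedNucleolus n ε p
  · obtain ⟨T₀, hT₀, hw, hne'⟩ := h0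
    refine exists_isLeastExcessLoss_of_sum_ne hT₀ hP hne' fun T _ _ => ?_
    simp only [excess_perturbedGame, sum_weight_sdiff hT₀, hw, neg_zero, asymmPenalty_zero]
    exact ⟨asymmPenalty_nonneg hε _, asymmPenalty_nonneg hε _⟩
  · push Not at h0
    obtain ⟨S₀, hS₀, hw, hlt⟩ := exists_sum_lt_of_sum_eq h0 hne
    refine ⟨S₀, hS₀, hlt, fun T hT hne' => ?_⟩
    rw [excess_perturbedGame, excess_perturbedGame, asymmPenalty_eq_two hw]
    exact two_le_asymmPenalty hε fun hw' => hne' (h0 T hT hw')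

end Games

theorem nucleolus_sub_perturbedNucleolus (n : ℕ) (ε : ℝ) :
    nucleolus n n - perturbedNucleolus n ε n = 2 ^ n * ε := by
  simp [nucleolus, perturbedNucleolus, weight_of_le le_rfl, mul_comm]

end NucleolusInstability

open NucleolusInstability in
/-- Nucleolus instability. For every `n` and `0 < ε ≤ 1` there are monotone,
superadditive games `(P, v)` and `(P, ṽ)` on `8(n+2)+1` players whose value functions
differ by at most `ε` on every coalition, yet whose nucleoli (the lexicographically
optimal allocations `y`, `ỹ`) differ by `2^n · ε` for some player. -/
theorem stmt12 (n : ℕ) (ε : ℝ) (hε0 : 0 < ε) (hε1 : ε ≤ 1) :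
    ∃ (P : Finset ℕ) (v vt : Finset ℕ → ℝ) (y yt : ℕ → ℝ),
      P.card = 8 * (n + 2) + 1 ∧
      v ∅ = 0 ∧ vt ∅ = 0 ∧
      (∀ S T : Finset ℕ, S ⊆ T → T ⊆ P → v S ≤ v T) ∧
      (∀ S T : Finset ℕ, S ⊆ T → T ⊆ P → vt S ≤ vt T) ∧
      (∀ S T : Finset ℕ, S ⊆ P → T ⊆ P → Disjoint S T → v S + v T ≤ v (S ∪ T)) ∧
      (∀ S T : Finset ℕ, S ⊆ P → T ⊆ P → Disjoint S T → vt S + vt T ≤ vt (S ∪ T)) ∧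
      (∀ S ⊆ P, |v S - vt S| ≤ ε) ∧
      (∑ p ∈ P, y p) = v P ∧ (∑ p ∈ P, yt p) = vt P ∧
      (∀ z : ℕ → ℝ, (∑ p ∈ P, z p) = v P →
        lexLE (excessListOn P v z) (excessListOn P v y)) ∧
      (∀ z : ℕ → ℝ, (∑ p ∈ P, z p) = vt P →
        lexLE (excessListOn P vt z) (excessListOn P vt yt)) ∧
      ∃ p ∈ P, |y p - yt p| = 2 ^ n * ε := by
  have hε := hε0.le
  refine ⟨players n, game n ε, perturbedGame n ε, nucleolus n, perturbedNucleolus n ε,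
    by simp [players], penaltyGame_empty (symmPenalty_zero ε),
    penaltyGame_empty (tiltedPenalty_zero ε),
    fun _ _ hST hT => penaltyGame_mono (symmPenalty_nonneg hε)
      (penalty_le_base (symmPenalty_le hε1) hT) hST,
    fun _ _ hST hT => penaltyGame_mono (tiltedPenalty_nonneg hε hε1)
      (penalty_le_base (tiltedPenalty_le hε hε1) hT) hST,
    fun _ _ _ _ => penaltyGame_add_le_union (symmPenalty_add_le hε hε1),
    fun _ _ _ _ => penaltyGame_add_le_union (tiltedPenalty_add_le hε hε1),
    fun S _ => abs_game_sub_perturbedGame_le hε S, sum_nucleolus, sum_perturbedNucleolus,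
    fun z hz => lexLE_excessListOn_of_isLeastExcessLoss
      (exists_isLeastExcessLoss_game (hz.trans sum_nucleolus.symm)),
    fun z hz => lexLE_excessListOn_of_isLeastExcessLoss
      (exists_isLeastExcessLoss_perturbedGame hε (hz.trans sum_perturbedNucleolus.symm)),
    n, mem_players.2 (by omega), ?_⟩
  rw [nucleolus_sub_perturbedNucleolus, abs_of_pos (by positivity)]
end
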